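/- arXiv:2509.09008 — 6 statements merged into one kernel-verified Lean document; each statement's English description precedes it below -/
import Mathlib

section
/- Let f = x² + a₁x + a₀ ∈ ℝ[x] be monic with non-real roots re^{±iθ} where r > 0 and 0 < θ < π. Then there exists a nonzero polynomial g ∈ ℝ[x] with deg(g) ≤ ⌈π/θ⌉ - 2 such that every coefficient of g·f is nonnegative. -/
/-! With `s + 2 = ⌈π / θ⌉`, i.e. `(s + 1) θ < π ≤ (s + 2) θ`, take
`g = ∑_{k ≤ s} r^(s-k) sin((k+1)θ) X^k`. Because `sin` satisfies the same three-term recurrence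
`sin((k+2)θ) = 2 cos θ sin((k+1)θ) - sin(kθ)` as the coefficients of `f`, the product `g f`
telescopes to the trinomial `r^(s+2) sin θ - r sin((s+2)θ) X^(s+1) + sin((s+1)θ) X^(s+2)`,
whose coefficients are nonnegative exactly by the choice of `s`. -/

open Polynomial Real

noncomputable def sinMultiplier (r θ : ℝ) : ℕ → ℝ[X]
  | 0 => C (sin θ)
  | m + 1 => C r * sinMultiplier r θ m + C (sin ((m + 2) * θ)) * X ^ (m + 1)

lemma natDegree_sinMultiplier_le (r θ : ℝ) (m : ℕ) :
    (sinMultiplier r θ m).natDegree ≤ m := by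
  induction m with
  | zero => simp [sinMultiplier]
  | succ m ih =>
    refine (natDegree_add_le _ _).trans (max_le ?_ ?_)
    · exact (natDegree_C_mul_le _ _).trans (ih.trans m.le_succ)
    · exact (natDegree_C_mul_le _ _).trans (natDegree_X_pow_le _)

lemma sin_add_two_mul (x θ : ℝ) :
    sin ((x + 2) * θ) = 2 * cos θ * sin ((x + 1) * θ) - sin (x * θ) := by
  have hadd : (x + 2) * θ = (x + 1) * θ + θ := by ring
  have hsub : x * θ = (x + 1) * θ - θ := by ring
  rw [hadd, sin_add, hsub, sin_sub]
  ring

lemma sinMultiplier_mul (r θ : ℝ) (m : ℕ) :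
    sinMultiplier r θ m * (X ^ 2 - C (2 * r * cos θ) * X + C (r ^ 2)) =
      C (r ^ (m + 2) * sin θ) + C (-(r * sin ((m + 2) * θ))) * X ^ (m + 1)
        + C (sin ((m + 1) * θ)) * X ^ (m + 2) := by
  induction m with
  | zero =>
    have h := sin_add_two_mul 0 θ
    simp only [zero_add, one_mul, zero_mul, sin_zero, sub_zero] at h
    simp only [sinMultiplier, Nat.cast_zero, zero_add, one_mul, h, C_mul, C_neg, C_pow,
      map_ofNat]
    ring
  | succ m ih =>
    have h := sin_add_two_mul (m + 1) θ
    simp only [add_assoc, one_add_one_eq_two, show (1 : ℝ) + 2 = 3 by norm_num] at h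
    simp only [sinMultiplier, Nat.cast_succ, add_assoc, one_add_one_eq_two,
      show (1 : ℝ) + 2 = 3 by norm_num, add_mul (C r * _), mul_assoc (C r), ih, h]
    simp only [C_mul, C_sub, C_neg, C_pow, map_ofNat]
    ring

lemma sinMultiplier_ne_zero {r θ : ℝ} (hr : r ≠ 0) (hθ : sin θ ≠ 0) (m : ℕ) :
    sinMultiplier r θ m ≠ 0 := by
  intro h
  have hcoeff := congrArg (coeff · 0) (sinMultiplier_mul r θ m)
  simp only [h, zero_mul, coeff_zero, coeff_add, coeff_C_zero, coeff_C_mul_X_pow] at hcoeff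
  simp [hr, hθ] at hcoeff

lemma coeff_C_add_C_mul_X_pow_add_C_mul_X_pow_nonneg {R : Type*} [Semiring R] [PartialOrder R]
    [IsOrderedRing R] {a b c : R} (ha : 0 ≤ a) (hb : 0 ≤ b)
    (hc : 0 ≤ c) (i j n : ℕ) : 0 ≤ (C a + C b * X ^ i + C c * X ^ j).coeff n := by
  simp only [coeff_add, coeff_C, coeff_C_mul_X_pow]
  split_ifs <;> positivity

lemma sin_nonpos_of_pi_le_of_le_two_pi {x : ℝ} (hx : π ≤ x) (hx' : x ≤ 2 * π) :
    sin x ≤ 0 := by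
  rw [← sin_sub_two_pi]
  exact sin_nonpos_of_nonpos_of_neg_pi_le (by linarith) (by linarith)

lemma mul_lt_le_mul_of_ceil_div_eq {x θ : ℝ} (hθ : 0 < θ) {n : ℤ} (h : ⌈x / θ⌉ = n) :
    (n - 1) * θ < x ∧ x ≤ n * θ := by
  rw [Int.ceil_eq_iff, lt_div_iff₀ hθ, div_le_iff₀ hθ] at h
  exact h

theorem stmt0 (r θ : ℝ) (hr : 0 < r) (hθ : 0 < θ) (hθπ : θ < π)
    (s : ℕ) (hs : (s : ℤ) = ⌈π / θ⌉ - 2) :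
    ∃ g : ℝ[X], g ≠ 0 ∧ g.natDegree ≤ s ∧
      ∀ n : ℕ,
        0 ≤ (g * (X ^ 2 - C (2 * r * Real.cos θ) * X + C (r ^ 2))).coeff n := by
  obtain ⟨hlt, hle⟩ := mul_lt_le_mul_of_ceil_div_eq (x := π) hθ (n := s + 2) (by omega)
  push_cast at hlt hle
  have hsinθ : 0 < sin θ := sin_pos_of_pos_of_lt_pi hθ hθπ
  have hsin₁ : 0 ≤ sin ((s + 1) * θ) :=
    sin_nonneg_of_nonneg_of_le_pi (by positivity) (by linarith)
  have hsin₂ : sin ((s + 2) * θ) ≤ 0 :=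
    sin_nonpos_of_pi_le_of_le_two_pi hle (by linarith)
  refine ⟨sinMultiplier r θ s, sinMultiplier_ne_zero hr.ne' hsinθ.ne' s,
    natDegree_sinMultiplier_le r θ s, fun n => ?_⟩
  rw [sinMultiplier_mul]
  exact coeff_C_add_C_mul_X_pow_add_C_mul_X_pow_nonneg (by positivity)
    (neg_nonneg.mpr (mul_nonpos_of_nonneg_of_nonpos hr.le hsin₂)) hsin₁ _ _ n
end

section
/- Let f = x² + a₁x + a₀ ∈ ℝ[x] be monic with non-real roots re^{±iθ}, r > 0, 0 < θ < π, and let s = ⌈π/θ⌉ - 2. Then for every nonzero g ∈ ℝ[x] with deg(g) < s, some coefficient of g·f is negative. -/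
/-!
If `g * f` had only nonnegative coefficients `aₙ`, then evaluating it at the root `z = r e^{iθ}`
of `f` would give `0 = Im (g f)(z) = ∑ aₙ rⁿ sin (nθ)`. The choice of `s` makes `deg (g f) · θ < π`,
so every term of this sum is nonnegative and the leading one is positive.
-/

open Polynomial Real

lemma Complex.im_aeval_ofReal_mul_exp_mul_I (p : ℝ[X]) (r θ : ℝ) :
    (aeval ((r : ℂ) * Complex.exp (θ * Complex.I)) p).im =
      ∑ n ∈ Finset.range (p.natDegree + 1), p.coeff n * (r ^ n * Real.sin (n * θ)) := by
  rw [aeval_eq_sum_range, Complex.im_sum]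
  refine Finset.sum_congr rfl fun n _ => ?_
  rw [mul_pow, ← Complex.exp_nat_mul, ← mul_assoc, Complex.real_smul, Complex.im_ofReal_mul,
    ← Complex.ofReal_pow, Complex.im_ofReal_mul, ← Complex.ofReal_natCast,
    ← Complex.ofReal_mul, Complex.exp_ofReal_mul_I_im]

lemma Polynomial.aeval_ofReal_mul_exp_mul_I_ne_zero {p : ℝ[X]} (hp : ∀ n, 0 ≤ p.coeff n)
    (hdeg : 0 < p.natDegree) {r θ : ℝ} (hr : 0 < r) (hθ : 0 < θ) (hθπ : p.natDegree * θ < π) :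
    aeval ((r : ℂ) * Complex.exp (θ * Complex.I)) p ≠ 0 := by
  intro h
  have him := congrArg Complex.im h
  rw [Complex.im_aeval_ofReal_mul_exp_mul_I, Complex.zero_im] at him
  have hterm_nonneg : ∀ n ∈ Finset.range (p.natDegree + 1),
      0 ≤ p.coeff n * (r ^ n * Real.sin (n * θ)) := by
    intro n hn
    have hnθ : (n : ℝ) * θ ≤ p.natDegree * θ := by
      gcongr; exact_mod_cast Finset.mem_range_succ_iff.mp hn
    have := Real.sin_nonneg_of_nonneg_of_le_pi (by positivity) (hnθ.trans hθπ.le)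
    have := hp n
    positivity
  have hlead := (Finset.sum_eq_zero_iff_of_nonneg hterm_nonneg).mp him _
    (Finset.self_mem_range_succ _)
  have hsin : 0 < Real.sin (p.natDegree * θ) :=
    Real.sin_pos_of_pos_of_lt_pi (by positivity) hθπ
  have hlead_pos : 0 < p.leadingCoeff :=
    (hp _).lt_of_ne (leadingCoeff_ne_zero.mpr (ne_zero_of_natDegree_gt hdeg)).symm
  exact (mul_pos hlead_pos (mul_pos (pow_pos hr _) hsin)).ne' hlead

lemma aeval_quadratic_ofReal_mul_exp_mul_I (r θ : ℝ) :
    aeval ((r : ℂ) * Complex.exp (θ * Complex.I))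
      (X ^ 2 - C (2 * r * Real.cos θ) * X + C (r ^ 2)) = 0 := by
  simp only [map_add, map_sub, map_mul, map_pow, aeval_X, aeval_C, Complex.coe_algebraMap]
  rw [Complex.exp_mul_I]
  push_cast
  linear_combination (r : ℂ) ^ 2 * (Complex.sin θ) ^ 2 * Complex.I_sq
    - (r : ℂ) ^ 2 * Complex.sin_sq_add_cos_sq (θ : ℂ)

theorem stmt1_general (r θ : ℝ) (hr : 0 < r) (hθ : 0 < θ)
    (s : ℕ) (hs : (s : ℤ) = ⌈π / θ⌉ - 2) :
    ∀ g : ℝ[X], g ≠ 0 → g.natDegree < s →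
      ∃ n : ℕ,
        (g * (X ^ 2 - C (2 * r * Real.cos θ) * X + C (r ^ 2))).coeff n < 0 := by
  intro g hg hgs
  by_contra! hcoeff
  set f : ℝ[X] := X ^ 2 - C (2 * r * Real.cos θ) * X + C (r ^ 2)
  have hf : f.natDegree = 2 := by unfold f; compute_degree!
  have hdeg : (g * f).natDegree = g.natDegree + 2 := by
    rw [natDegree_mul hg (by rintro h; simp [h] at hf), hf]
  refine aeval_ofReal_mul_exp_mul_I_ne_zero hcoeff (by omega) hr hθ ?_ ?_
  · have hlt : ((g * f).natDegree : ℝ) < π / θ := by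
      rw [hdeg]
      exact_mod_cast Int.lt_ceil.mp (by omega)
    exact (lt_div_iff₀ hθ).mp hlt
  · rw [map_mul, aeval_quadratic_ofReal_mul_exp_mul_I, mul_zero]

theorem stmt1 (r θ : ℝ) (hr : 0 < r) (hθ : 0 < θ) (hθπ : θ < π)
    (s : ℕ) (hs : (s : ℤ) = ⌈π / θ⌉ - 2) :
    ∀ g : ℝ[X], g ≠ 0 → g.natDegree < s →
      ∃ n : ℕ,
        (g * (X ^ 2 - C (2 * r * Real.cos θ) * X + C (r ^ 2))).coeff n < 0 :=
  stmt1_general r θ hr hθ s hs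
end

section
/- Let r > 0, 0 < θ < π, s = ⌈π/θ⌉ - 2, and define g(x) = Σ_{i=0}^{s} r^{s-i} · (sin((s-i+1)θ)/sin θ) · x^i and f(x) = x² - 2r cos(θ) x + r². Then every coefficient of g·f is nonnegative. -/
open Polynomial Real

/-! The numbers `a k = r ^ k * sin ((k + 1) θ) / sin θ` satisfy the recurrence
`a (k + 2) = 2 r cos θ * a (k + 1) - r ^ 2 * a k` whose characteristic polynomial is `f`.
As `g` lists them in reverse order, all coefficients of `g * f` cancel but three:
`g * f = X ^ (s + 2) - a (s + 1) X + r ^ 2 a s`. The choice of `s` gives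
`(s + 1) θ < π ≤ (s + 2) θ < 2π`, hence `a s ≥ 0 ≥ a (s + 1)`. -/

namespace Polynomial

variable {R : Type*} [CommRing R]

theorem sum_range_C_mul_X_pow_mul_quadratic (p q : R) (a : ℕ → R) (h0 : a 0 = 1) (h1 : a 1 = p)
    (hrec : ∀ k, a (k + 2) = p * a (k + 1) - q * a k) (s : ℕ) :
    (∑ i ∈ Finset.range (s + 1), C (a (s - i)) * X ^ i) * (X ^ 2 - C p * X + C q) =
      X ^ (s + 2) - C (a (s + 1)) * X + C (q * a s) := by
  induction s with
  | zero => simp [h0, h1]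
  | succ s ih =>
    have hsum : ∑ i ∈ Finset.range (s + 2), C (a (s + 1 - i)) * X ^ i =
        (∑ i ∈ Finset.range (s + 1), C (a (s - i)) * X ^ i) * X + C (a (s + 1)) := by
      simp only [Finset.sum_range_succ' _ (s + 1), Finset.sum_mul, Nat.add_sub_add_right, pow_succ,
        mul_assoc, Nat.sub_zero, pow_zero, mul_one]
    rw [hsum, add_mul, mul_right_comm, ih, hrec, C_sub, C_mul, C_mul, C_mul]
    ring

theorem coeff_X_pow_add_two_sub_C_mul_X_add_C_nonneg [PartialOrder R] [IsOrderedRing R]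
    {b c : R} (hb : b ≤ 0) (hc : 0 ≤ c) (m n : ℕ) :
    0 ≤ (X ^ (m + 2) - C b * X + C c).coeff n := by
  simp only [coeff_add, coeff_sub, coeff_X_pow, coeff_C_mul_X, coeff_C]
  split_ifs <;> first | omega | simp [hb, hc]

end Polynomial

/-- The coefficient of `x ^ i` in the Riggs multiplier `g` is `riggsCoeff r θ (s - i)`. -/
noncomputable def riggsCoeff (r θ : ℝ) (k : ℕ) : ℝ := r ^ k * sin ((k + 1 : ℕ) * θ) / sin θ

section

variable (r : ℝ) {θ : ℝ}

theorem riggsCoeff_zero (hθ : sin θ ≠ 0) : riggsCoeff r θ 0 = 1 := by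
  simp [riggsCoeff, hθ]

theorem riggsCoeff_one (hθ : sin θ ≠ 0) : riggsCoeff r θ 1 = 2 * r * cos θ := by
  rw [riggsCoeff, pow_one, Nat.cast_add, Nat.cast_one, one_add_one_eq_two, sin_two_mul]
  field_simp

theorem riggsCoeff_add_two (k : ℕ) :
    riggsCoeff r θ (k + 2) = 2 * r * cos θ * riggsCoeff r θ (k + 1) - r ^ 2 * riggsCoeff r θ k := by
  have hsin : sin ((k + 2 + 1) * θ) + sin ((k + 1) * θ) = 2 * cos θ * sin ((k + 1 + 1) * θ) := by
    rw [sin_add_sin]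
    ring_nf
  simp only [riggsCoeff]
  push_cast
  linear_combination r ^ (k + 2) / sin θ * hsin

theorem riggsCoeff_nonneg (hr : 0 ≤ r) (hθ : 0 ≤ θ) (hsin : 0 ≤ sin θ) {k : ℕ}
    (hk : (k + 1) * θ ≤ π) :
    0 ≤ riggsCoeff r θ k := by
  have : 0 ≤ sin ((k + 1 : ℕ) * θ) := sin_nonneg_of_nonneg_of_le_pi (by positivity) (by simpa)
  unfold riggsCoeff
  positivity

theorem riggsCoeff_nonpos (hr : 0 ≤ r) (hsin : 0 ≤ sin θ) {k : ℕ} (hk : π ≤ (k + 1) * θ)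
    (hk' : (k + 1) * θ ≤ 2 * π) : riggsCoeff r θ k ≤ 0 := by
  have : sin ((k + 1 : ℕ) * θ) ≤ 0 := by
    rw [← sin_sub_two_pi]
    exact sin_nonpos_of_nonpos_of_neg_pi_le (by push_cast; linarith) (by push_cast; linarith)
  unfold riggsCoeff
  exact div_nonpos_of_nonpos_of_nonneg (mul_nonpos_of_nonneg_of_nonpos (by positivity) this) hsin

end

theorem add_one_mul_lt_and_le_add_two_mul {x y : ℝ} (hx : 0 < x) {s : ℕ}
    (hs : (s : ℤ) = ⌈y / x⌉ - 2) : (s + 1) * x < y ∧ y ≤ (s + 2) * x := by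
  have hceil : ⌈y / x⌉ = ((s + 2 : ℕ) : ℤ) := by push_cast; omega
  obtain ⟨hlt, hle⟩ := Int.ceil_eq_iff.mp hceil
  push_cast at hlt hle
  exact ⟨by rw [← lt_div_iff₀ hx]; linarith, by rwa [← div_le_iff₀ hx]⟩

theorem stmt2 (r θ : ℝ) (hr : 0 < r) (hθ : 0 < θ) (hθπ : θ < π)
    (s : ℕ) (hs : (s : ℤ) = ⌈π / θ⌉ - 2) :
    ∀ n : ℕ,
      0 ≤ ((∑ i ∈ Finset.range (s + 1),
              C (r ^ (s - i) * Real.sin ((s - i + 1 : ℕ) * θ) / Real.sin θ) * X ^ i) *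
            (X ^ 2 - C (2 * r * Real.cos θ) * X + C (r ^ 2))).coeff n := by
  intro n
  have hsin : 0 < sin θ := sin_pos_of_pos_of_lt_pi hθ hθπ
  obtain ⟨hlt, hle⟩ := add_one_mul_lt_and_le_add_two_mul hθ hs
  have hprod := sum_range_C_mul_X_pow_mul_quadratic _ _ (riggsCoeff r θ)
    (riggsCoeff_zero r hsin.ne') (riggsCoeff_one r hsin.ne') (riggsCoeff_add_two r) s
  change 0 ≤ ((∑ i ∈ Finset.range (s + 1), C (riggsCoeff r θ (s - i)) * X ^ i) * _).coeff n
  rw [hprod]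
  refine coeff_X_pow_add_two_sub_C_mul_X_add_C_nonneg ?_ ?_ s n
  · exact riggsCoeff_nonpos r hr.le hsin.le (by push_cast; linarith) (by push_cast; linarith)
  · exact mul_nonneg (sq_nonneg r) (riggsCoeff_nonneg r hr.le hθ.le hsin.le hlt.le)
end

section
/- Let r > 0, 0 < θ < π, s = ⌈π/θ⌉ - 2, and 0 ≤ i ≤ s. Then r^{s-i}·sin((s-i+1)θ)/sin(θ) ≤ r^{s-i}·sin((i+1)θ)/sin((s+1)θ), i.e., each coefficient of the Riggs multiplier is at most the corresponding coefficient of Meissner's monic multiplier. -/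
/-!
Both denominators are positive, because `s = ⌈π/θ⌉ - 2` places `(s+1)θ < π ≤ (s+2)θ`.
Cross-multiplying, the claim becomes `sin((s+1)θ) sin((s-i+1)θ) ≤ sin((i+1)θ) sin θ`, and the
difference of the two sides factors by product-to-sum as `sin((s+2)θ) sin((s-i)θ)`, a product of
a nonpositive and a nonnegative sine.
-/

open Real

theorem sin_mul_sin_sub_sin_mul_sin (u v θ : ℝ) :
    sin ((u + 1) * θ) * sin ((u - v + 1) * θ) - sin ((v + 1) * θ) * sin θ =
      sin ((u + 2) * θ) * sin ((u - v) * θ) := by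
  have product_to_sum : ∀ x y : ℝ, sin x * sin y = (cos (x - y) - cos (x + y)) / 2 := by
    intro x y
    rw [cos_sub, cos_add]
    ring
  simp only [product_to_sum]
  ring_nf

theorem mul_lt_and_le_mul_of_eq_ceil_sub_two {a θ : ℝ} (hθ : 0 < θ) {n : ℤ}
    (hn : n = ⌈a / θ⌉ - 2) : (n + 1) * θ < a ∧ a ≤ (n + 2) * θ := by
  obtain ⟨hlt, hle⟩ := Int.ceil_eq_iff.mp (eq_sub_iff_add_eq.mp hn).symm
  push_cast at hlt hle
  exact ⟨(lt_div_iff₀ hθ).mp (by linarith), (div_le_iff₀ hθ).mp hle⟩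

theorem sin_mul_sin_le_sin_mul_sin {n k θ : ℝ} (hθ : 0 < θ) (hk : 0 ≤ k) (hkn : k ≤ n)
    (hlt : (n + 1) * θ < π) (hle : π ≤ (n + 2) * θ) :
    sin ((n - k + 1) * θ) * sin ((n + 1) * θ) ≤ sin ((k + 1) * θ) * sin θ := by
  have hsin_nonpos : sin ((n + 2) * θ) ≤ 0 := by
    have := sin_nonneg_of_nonneg_of_le_pi (x := (n + 2) * θ - π) (by linarith) (by nlinarith)
    rwa [sin_sub_pi, neg_nonneg] at this
  have hsin_nonneg : 0 ≤ sin ((n - k) * θ) :=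
    sin_nonneg_of_nonneg_of_le_pi (by nlinarith) (by nlinarith)
  linarith [sin_mul_sin_sub_sin_mul_sin n k θ,
    mul_nonpos_of_nonpos_of_nonneg hsin_nonpos hsin_nonneg]

theorem stmt10 (r θ : ℝ) (hr : 0 < r) (hθ : 0 < θ) (hθπ : θ < π)
    (s : ℕ) (hs : (s : ℤ) = ⌈π / θ⌉ - 2) :
    ∀ i : ℕ, i ≤ s →
      r ^ (s - i) * Real.sin (((s : ℝ) - i + 1) * θ) / Real.sin θ ≤
        r ^ (s - i) * Real.sin (((i : ℝ) + 1) * θ) / Real.sin (((s : ℝ) + 1) * θ) := by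
  intro i hi
  obtain ⟨hlt, hle⟩ := mul_lt_and_le_mul_of_eq_ceil_sub_two (a := π) hθ hs
  push_cast at hlt hle
  have hsinθ : 0 < sin θ := sin_pos_of_pos_of_lt_pi hθ hθπ
  have hsin_succ : 0 < sin ((s + 1) * θ) := sin_pos_of_pos_of_lt_pi (by positivity) hlt
  rw [mul_div_assoc, mul_div_assoc]
  refine mul_le_mul_of_nonneg_left ?_ (pow_pos hr _).le
  rw [div_le_div_iff₀ hsinθ hsin_succ]
  exact sin_mul_sin_le_sin_mul_sin hθ i.cast_nonneg (by exact_mod_cast hi) hlt hle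
end

section
/- Let f = x² - 2x + 2 and g = x² + 2x + 2. Then g·f = x⁴ + 4, so all coefficients of g·f are nonnegative, and no nonzero polynomial g' of degree < 2 satisfies that all coefficients of g'·f are nonnegative. -/
/-! Since `x⁴ + 4 = (x² + 2x + 2)(x² - 2x + 2)`, the first two claims are immediate. For the third,
write `g' = b x + a`; then `g' · (x² - 2x + 2) = b x³ + (a - 2b) x² + (2b - 2a) x + 2a`, and
nonnegativity of these coefficients forces `a ≥ 2b ≥ 2a ≥ 0` and `b ≥ 0`, so `a = b = 0`. -/

open Polynomial

section CommRing

variable {R : Type*} [CommRing R]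

theorem X_sq_add_two_mul_X_sq_sub_two :
    (X ^ 2 + C 2 * X + C 2) * ((X : R[X]) ^ 2 - C 2 * X + C 2) = X ^ 4 + C 4 := by
  simp only [map_ofNat]
  ring

theorem linear_mul_X_sq_sub_two (a b : R) :
    (C b * X + C a) * ((X : R[X]) ^ 2 - C 2 * X + C 2) =
      C b * X ^ 3 + C (a - 2 * b) * X ^ 2 + C (2 * b - 2 * a) * X + C (2 * a) := by
  simp only [C_sub, C_mul]
  ring

end CommRing

theorem coeff_X_pow_add_C_nonneg {R : Type*} [Semiring R] [PartialOrder R] [IsOrderedRing R]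
    {c : R} (hc : 0 ≤ c) (k n : ℕ) : 0 ≤ (X ^ k + C c).coeff n := by
  rw [coeff_add, coeff_X_pow, coeff_C]
  exact add_nonneg (by split_ifs <;> simp) (by split_ifs <;> simp [hc])

theorem eq_zero_of_natDegree_lt_two_of_coeff_mul_nonneg {R : Type*} [CommRing R] [LinearOrder R]
    [IsStrictOrderedRing R] {g : R[X]} (hg : g.natDegree < 2)
    (h : ∀ n, 0 ≤ (g * (X ^ 2 - C 2 * X + C 2)).coeff n) : g = 0 := by
  have hlin : g = C (g.coeff 1) * X + C (g.coeff 0) :=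
    g.eq_X_add_C_of_natDegree_le_one (Nat.lt_succ_iff.mp hg)
  set a := g.coeff 0
  set b := g.coeff 1
  rw [hlin, linear_mul_X_sq_sub_two] at h
  have h0 := h 0
  have h1 := h 1
  have h2 := h 2
  have h3 := h 3
  simp only [coeff_add, coeff_C_mul, coeff_X_pow, coeff_X, coeff_C] at h0 h1 h2 h3
  norm_num at h0 h1 h2 h3
  have ha : a = 0 := by linarith
  have hb : b = 0 := by linarith
  rw [hlin, ha, hb, map_zero, zero_mul, zero_add]

theorem stmt16 :
    ((X ^ 2 + C 2 * X + C 2) * ((X : ℝ[X]) ^ 2 - C 2 * X + C 2) = X ^ 4 + C 4) ∧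
      (∀ n : ℕ,
        0 ≤ ((X ^ 2 + C 2 * X + C 2) * ((X : ℝ[X]) ^ 2 - C 2 * X + C 2)).coeff n) ∧
      ¬∃ g' : ℝ[X], g' ≠ 0 ∧ g'.natDegree < 2 ∧
        ∀ n : ℕ, 0 ≤ (g' * ((X : ℝ[X]) ^ 2 - C 2 * X + C 2)).coeff n := by
  refine ⟨X_sq_add_two_mul_X_sq_sub_two, fun n => ?_, ?_⟩
  · rw [X_sq_add_two_mul_X_sq_sub_two]
    exact coeff_X_pow_add_C_nonneg zero_le_four 4 n
  · rintro ⟨g', hne, hdeg, hcoeff⟩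
    exact hne (eq_zero_of_natDegree_lt_two_of_coeff_mul_nonneg hdeg hcoeff)
end

section
/- Let r > 0, 0 < θ < π, s = ⌈π/θ⌉ - 2, and let a₁ = -2r cos θ, a₀ = r². Define the (s+1)×(s+1) lower-triangular banded matrix R_s with 1's on the diagonal, a₁ on the first subdiagonal, and a₀ on the second subdiagonal. Then R_s is invertible, and the row vector b defined by b = (0,...,0,1)·R_s⁻¹ has entries b_i = r^{s-i} sin((s-i+1)θ)/sin θ. -/
open Real Matrix Polynomial

/-!
`R` is lower unitriangular, hence invertible, and `b = e_s R⁻¹` is the unique solution of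
`b R = e_s`. Column `j` of `b R` is `b_j + a₁ b_{j+1} + a₀ b_{j+2}` (truncated at the last
index), so with `b_i = c_{s-i}` the equation `b R = e_s` says `c₀ = 1`, `c₁ + a₁ = 0` and
`c_{k+2} + a₁ c_{k+1} + a₀ c_k = 0`. For `a₁ = -2r cos θ`, `a₀ = r²` this is the three-term
recurrence of `c_k = r^k U_k(cos θ)`, with `U_k` the Chebyshev polynomials of the second
kind, and `U_k(cos θ) = sin((k+1)θ) / sin θ`.
-/

/-- The paper's `R_s` for the quadratic `x² + a₁ x + a₀`. -/
def IsQuadraticBand {K : Type*} [CommRing K] {n : ℕ} (R : Matrix (Fin n) (Fin n) K)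
    (a₁ a₀ : K) : Prop :=
  ∀ i j : Fin n, R i j =
    if (i : ℕ) = (j : ℕ) then 1
    else if (i : ℕ) = (j : ℕ) + 1 then a₁
    else if (i : ℕ) = (j : ℕ) + 2 then a₀
    else 0

namespace IsQuadraticBand

variable {K : Type*} [CommRing K] {n : ℕ} {R : Matrix (Fin n) (Fin n) K} {a₁ a₀ : K}

theorem isLowerTriangular (hR : IsQuadraticBand R a₁ a₀) : R.IsLowerTriangular := by
  intro i j hij
  have hij : (i : ℕ) < j := hij
  rw [hR, if_neg (by omega), if_neg (by omega), if_neg (by omega)]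

theorem det_eq_one (hR : IsQuadraticBand R a₁ a₀) : R.det = 1 := by
  rw [det_of_isLowerTriangular R hR.isLowerTriangular]
  exact Finset.prod_eq_one fun i _ => by rw [hR, if_pos rfl]

theorem isUnit (hR : IsQuadraticBand R a₁ a₀) : IsUnit R :=
  (isUnit_iff_isUnit_det R).2 (hR.det_eq_one ▸ isUnit_one)

theorem vecMul_apply (hR : IsQuadraticBand R a₁ a₀) (f : ℕ → K) (j : Fin n) :
    vecMul (fun i : Fin n => f i) R j =
      f j + (if j + 1 < n then f (j + 1) * a₁ else 0)
        + (if j + 2 < n then f (j + 2) * a₀ else 0) := by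
  have hterm : ∀ i : ℕ, f i * (if i = j then 1 else if i = j + 1 then a₁
      else if i = j + 2 then a₀ else 0) =
      (if i = j then f i else 0) + (if i = j + 1 then f i * a₁ else 0)
        + (if i = j + 2 then f i * a₀ else 0) := by
    intro i
    split_ifs <;> first | omega | ring
  simp only [vecMul, dotProduct, hR _ j]
  rw [Fin.sum_univ_eq_sum_range (fun i => f i * (if i = j then 1 else if i = j + 1 then a₁
      else if i = j + 2 then a₀ else 0)) n]
  simp only [hterm, Finset.sum_add_distrib, Finset.sum_ite_eq', Finset.mem_range, if_pos j.isLt]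

theorem vecMul_rev_eq_single {s : ℕ} {R : Matrix (Fin (s + 1)) (Fin (s + 1)) K}
    (hR : IsQuadraticBand R a₁ a₀) (c : ℕ → K) (h₀ : c 0 = 1) (h₁ : c 1 + a₁ = 0)
    (hrec : ∀ k, c (k + 2) + a₁ * c (k + 1) + a₀ * c k = 0) :
    vecMul (fun i : Fin (s + 1) => c (s - i)) R =
      fun j : Fin (s + 1) => if (j : ℕ) = s then (1 : K) else 0 := by
  funext j
  rw [hR.vecMul_apply (fun i => c (s - i))]
  have hj := j.isLt
  rcases Nat.lt_trichotomy (j + 1) s with hlt | hpen | hlast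
  · rw [if_pos (by omega), if_pos (by omega), if_neg (by omega),
      show s - j = s - (j + 2) + 2 by omega, show s - (j + 1) = s - (j + 2) + 1 by omega]
    linear_combination hrec (s - (j + 2))
  · rw [if_pos (by omega), if_neg (by omega), if_neg (by omega),
      show s - j = 1 by omega, show s - (j + 1) = 0 by omega, h₀]
    linear_combination h₁
  · rw [if_neg (by omega), if_neg (by omega), if_pos (by omega), show s - j = 0 by omega, h₀]
    ring

end IsQuadraticBand

theorem Polynomial.Chebyshev.scaled_U_add_two {K : Type*} [CommRing K] (r x : K) (k : ℕ) :
    r ^ (k + 2) * (U K (k + 2 : ℕ)).eval x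
      + -(2 * r * x) * (r ^ (k + 1) * (U K (k + 1 : ℕ)).eval x)
      + r ^ 2 * (r ^ k * (U K k).eval x) = 0 := by
  have h := congrArg (eval x) (Chebyshev.U_add_two K k)
  push_cast
  simp only [eval_sub, eval_mul, eval_ofNat, eval_X] at h
  linear_combination r ^ (k + 2) * h

theorem stmt17_general (r θ : ℝ) (hθ : 0 < θ) (hθπ : θ < π)
    (s : ℕ)
    (R : Matrix (Fin (s + 1)) (Fin (s + 1)) ℝ)
    (hR : ∀ i j : Fin (s + 1),
      R i j =
        if (i : ℕ) = (j : ℕ) then 1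
        else if (i : ℕ) = (j : ℕ) + 1 then -(2 * r * Real.cos θ)
        else if (i : ℕ) = (j : ℕ) + 2 then r ^ 2
        else 0) :
    IsUnit R ∧
      ∀ i : Fin (s + 1),
        Matrix.vecMul (fun j : Fin (s + 1) => if (j : ℕ) = s then (1 : ℝ) else 0) R⁻¹ i =
          r ^ (s - (i : ℕ)) * Real.sin (((s : ℝ) - (i : ℕ) + 1) * θ) / Real.sin θ := by
  have hband : IsQuadraticBand R (-(2 * r * cos θ)) (r ^ 2) := hR
  have hb := hband.vecMul_rev_eq_single (fun k => r ^ k * (Chebyshev.U ℝ k).eval (cos θ))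
    (by simp)
    (by simp only [pow_one, Nat.cast_one, Chebyshev.U_one, eval_mul, eval_ofNat, eval_X]; ring)
    (Chebyshev.scaled_U_add_two r (cos θ))
  refine ⟨hband.isUnit, fun i => ?_⟩
  rw [← hb, vecMul_vecMul, mul_nonsing_inv _ (hband.det_eq_one ▸ isUnit_one), vecMul_one,
    mul_div_assoc]
  congr 1
  rw [eq_div_iff (sin_pos_of_pos_of_lt_pi hθ hθπ).ne', Chebyshev.U_real_cos]
  push_cast [Nat.cast_sub (Nat.lt_succ_iff.mp i.isLt)]
  ring

theorem stmt17 (r θ : ℝ) (hr : 0 < r) (hθ : 0 < θ) (hθπ : θ < π)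
    (s : ℕ) (hs : (s : ℤ) = ⌈π / θ⌉ - 2)
    (R : Matrix (Fin (s + 1)) (Fin (s + 1)) ℝ)
    (hR : ∀ i j : Fin (s + 1),
      R i j =
        if (i : ℕ) = (j : ℕ) then 1
        else if (i : ℕ) = (j : ℕ) + 1 then -(2 * r * Real.cos θ)
        else if (i : ℕ) = (j : ℕ) + 2 then r ^ 2
        else 0) :
    IsUnit R ∧
      ∀ i : Fin (s + 1),
        Matrix.vecMul (fun j : Fin (s + 1) => if (j : ℕ) = s then (1 : ℝ) else 0) R⁻¹ i =
          r ^ (s - (i : ℕ)) * Real.sin (((s : ℝ) - (i : ℕ) + 1) * θ) / Real.sin θ :=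
  stmt17_general r θ hθ hθπ s R hR
end
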